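/- arXiv:1510.02593 — 2 statements merged into one kernel-verified Lean document; each statement's English description precedes it below -/
import Mathlib

section
/- Let (ξ_i)_{i≥1} be positive, non-constant i.i.d. random variables with 𝔼[ξ_1] = 1 and 𝔼[ξ_1³ + (log ξ_1)²] < ∞. Then there exists a constant c ∈ (0,∞), depending only on the law of ξ_1, such that for every sequence (α_i)_{i≥1} ∈ [0,1]^ℕ with Σ_{i=1}^∞ α_i = 1, setting U := Σ_{i=1}^∞ α_i ξ_i − 1 (so U > −1 a.s.), one has (1/c) Σ_{i=1}^∞ α_i² ≤ 𝔼[U²/(2+U)]. -/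
/-!
Write `T = ∑ αᵢ ξᵢ`, so that `E T = 1` and `U²/(2+U) = T - 3 + 4/(1+T)`; it suffices to show
`E[1/(1+T)] ≥ 1/2 + c' ∑ αᵢ²`. By `1/(1+T) = ∫₀^∞ e^{-u} e^{-uT} du` and independence,
`E[1/(1+T)] = ∫₀^∞ e^{-u} ∏ᵢ E[e^{-uαᵢξᵢ}] du`. Each factor is at least `e^{-uαᵢ}` (Jensen), and,
for `u ≤ 1/K`, at least `e^{-uαᵢ} (1 + m u² αᵢ² / 4)` with `m = E[(ξ - 1)²; ξ ≤ K]`, by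
`e^y ≥ 1 + y + y²/4` for `y ≥ -2`. Since `ξ` is not constant, `m > 0` for some `K`, and
integrating the resulting lower bound over `u` gives `c' = m/4 ∫₀^{1/K} u² e^{-2u} du`.
-/

open MeasureTheory ProbabilityTheory Filter Topology Set Real

lemma Real.one_add_add_sq_div_four_le_exp {y : ℝ} (hy : -2 ≤ y) :
    1 + y + y ^ 2 / 4 ≤ exp y := by
  have h := add_one_le_exp (y / 2)
  have hexp : exp y = exp (y / 2) ^ 2 := by rw [← exp_nat_mul]; ring_nf
  nlinarith [sq_nonneg (y / 2)]

lemma Finset.one_add_sum_le_prod_one_add {ι R : Type*} [CommSemiring R] [PartialOrder R]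
    [IsOrderedRing R] (s : Finset ι) {x : ι → R} (hx : ∀ i ∈ s, 0 ≤ x i) :
    1 + ∑ i ∈ s, x i ≤ ∏ i ∈ s, (1 + x i) := by
  classical
  induction s using Finset.induction_on with
  | empty => simp
  | insert j s hj ih =>
    have hxj : 0 ≤ x j := hx j (mem_insert_self j s)
    have hx' (i : ι) (hi : i ∈ s) : 0 ≤ x i := hx i (mem_insert_of_mem hi)
    rw [sum_insert hj, prod_insert hj]
    calc 1 + (x j + ∑ i ∈ s, x i)
        ≤ 1 + (x j + ∑ i ∈ s, x i) + x j * ∑ i ∈ s, x i :=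
          le_add_of_nonneg_right (mul_nonneg hxj (sum_nonneg hx'))
      _ = (1 + x j) * (1 + ∑ i ∈ s, x i) := by ring
      _ ≤ (1 + x j) * ∏ i ∈ s, (1 + x i) :=
          mul_le_mul_of_nonneg_left (ih hx') (add_nonneg zero_le_one hxj)

section MeanOne

variable {Ω : Type*} [MeasurableSpace Ω] {μ : Measure Ω} {X : Ω → ℝ}

lemma integrable_exp_mul_of_nonpos [IsFiniteMeasure μ] (hX : AEMeasurable X μ)
    (hX0 : 0 ≤ᵐ[μ] X) {t : ℝ} (ht : t ≤ 0) : Integrable (fun a => exp (t * X a)) μ := by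
  refine (integrable_const 1).mono' (by fun_prop) ?_
  filter_upwards [hX0] with a ha
  rw [norm_of_nonneg (exp_pos _).le, exp_le_one_iff]
  exact mul_nonpos_of_nonpos_of_nonneg ht ha

lemma integrableOn_sq_sub_one_setOf_le [IsFiniteMeasure μ] (hX : Measurable X)
    (hX0 : 0 ≤ᵐ[μ] X) (K : ℝ) : IntegrableOn (fun a => (X a - 1) ^ 2) {a | X a ≤ K} μ := by
  refine (integrable_const (1 + K ^ 2)).mono' (by fun_prop) ?_
  rw [ae_restrict_iff' (measurableSet_le hX measurable_const)]
  filter_upwards [hX0] with a (ha : 0 ≤ X a) (haK : X a ≤ K)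
  rw [norm_of_nonneg (sq_nonneg _)]
  nlinarith

lemma exp_mul_integral_le_mgf [IsFiniteMeasure μ] {g : Ω → ℝ} (hX : AEMeasurable X μ)
    (hX0 : 0 ≤ᵐ[μ] X) {t : ℝ} (ht : t ≤ 0) (hg : Integrable g μ)
    (hle : ∀ᵐ a ∂μ, exp t * g a ≤ exp (t * X a)) :
    exp t * ∫ a, g a ∂μ ≤ mgf X μ t := by
  rw [← integral_const_mul]
  exact integral_mono_ae (hg.const_mul _) (integrable_exp_mul_of_nonpos hX hX0 ht) hle

lemma integral_one_add_mul_sub_one [IsProbabilityMeasure μ] (hX1 : ∫ a, X a ∂μ = 1) (t : ℝ) :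
    ∫ a, (1 + t * (X a - 1)) ∂μ = 1 := by
  -- a non-integrable `X` would have integral `0`
  have hXi : Integrable X μ := .of_integral_ne_zero (by simp [hX1])
  have hc : Integrable (fun _ : Ω => (1 : ℝ)) μ := integrable_const 1
  have hl : Integrable (fun a => t * (X a - 1)) μ := (hXi.sub hc).const_mul t
  rw [integral_add hc hl, integral_const_mul, integral_sub hXi hc, hX1]
  simp

lemma exp_le_mgf_of_integral_eq_one [IsProbabilityMeasure μ] (hX : AEMeasurable X μ)
    (hX0 : 0 ≤ᵐ[μ] X) (hX1 : ∫ a, X a ∂μ = 1) {t : ℝ} (ht : t ≤ 0) : exp t ≤ mgf X μ t := by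
  have hXi : Integrable X μ := .of_integral_ne_zero (by simp [hX1])
  have := exp_mul_integral_le_mgf (g := fun a => 1 + t * (X a - 1)) hX hX0 ht (by fun_prop)
    (ae_of_all _ fun a => ?_)
  · rwa [integral_one_add_mul_sub_one hX1, mul_one] at this
  rw [show t * X a = t + t * (X a - 1) by ring, exp_add]
  gcongr
  linarith [add_one_le_exp (t * (X a - 1))]

lemma exp_mul_one_add_le_mgf [IsProbabilityMeasure μ] (hX : Measurable X) (hX0 : 0 ≤ᵐ[μ] X)
    (hX1 : ∫ a, X a ∂μ = 1) {K t : ℝ} (hK : 0 < K) (htK : -K⁻¹ ≤ t) (ht : t ≤ 0) :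
    exp t * (1 + (∫ a in {a | X a ≤ K}, (X a - 1) ^ 2 ∂μ) / 4 * t ^ 2) ≤ mgf X μ t := by
  have hXi : Integrable X μ := .of_integral_ne_zero (by simp [hX1])
  set S := {a | X a ≤ K}
  have hS : MeasurableSet S := measurableSet_le hX measurable_const
  have hind := (integrableOn_sq_sub_one_setOf_le hX hX0 K).integrable_indicator hS
  have := exp_mul_integral_le_mgf
    (g := fun a => 1 + t * (X a - 1) + t ^ 2 / 4 * S.indicator (fun a => (X a - 1) ^ 2) a)
    hX.aemeasurable hX0 ht (by fun_prop) ?_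
  · rwa [integral_add (by fun_prop) (hind.const_mul _), integral_one_add_mul_sub_one hX1,
      integral_const_mul, integral_indicator hS, div_mul_comm] at this
  filter_upwards [hX0] with a (ha : 0 ≤ X a)
  rw [show t * X a = t + t * (X a - 1) by ring, exp_add]
  gcongr
  by_cases haS : a ∈ S
  · have : K⁻¹ * X a ≤ 1 := inv_mul_le_one_of_le₀ haS hK.le
    have := one_add_add_sq_div_four_le_exp (y := t * (X a - 1))
      (by nlinarith [mul_le_mul_of_nonneg_right htK ha])
    rw [indicator_of_mem haS]
    linarith
  · rw [indicator_of_notMem haS]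
    linarith [add_one_le_exp (t * (X a - 1))]

lemma exists_pos_setIntegral_sq_sub_one_pos [IsFiniteMeasure μ] (hX : Measurable X)
    (hX0 : 0 ≤ᵐ[μ] X) (hX1 : ¬ ∀ᵐ a ∂μ, X a = 1) :
    ∃ K, 0 < K ∧ 0 < ∫ a in {a | X a ≤ K}, (X a - 1) ^ 2 ∂μ := by
  by_contra! h
  refine hX1 ?_
  have hzero (n : ℕ) : ∀ᵐ a ∂μ, X a ≤ n + 1 → X a = 1 := by
    have hS : MeasurableSet {a | X a ≤ n + 1} := measurableSet_le hX measurable_const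
    have h0 := le_antisymm (h (n + 1) (by positivity))
      (setIntegral_nonneg hS fun _ _ => sq_nonneg _)
    rw [setIntegral_eq_zero_iff_of_nonneg_ae (ae_of_all _ fun _ => sq_nonneg _)
      (integrableOn_sq_sub_one_setOf_le hX hX0 _), EventuallyEq, ae_restrict_iff' hS] at h0
    filter_upwards [h0] with a ha haK
    simpa [sub_eq_zero] using ha haK
  filter_upwards [ae_all_iff.2 hzero] with a ha
  obtain ⟨n, hn⟩ := exists_nat_ge (X a)
  exact ha n (by linarith)

end MeanOne

lemma integral_exp_neg_mul_Ioi_zero {b : ℝ} (hb : 0 < b) :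
    ∫ u in Ioi (0 : ℝ), exp (-b * u) = b⁻¹ := by
  rw [integral_exp_mul_Ioi (neg_neg_of_pos hb), mul_zero, exp_zero, neg_div_neg_eq, one_div]

lemma setIntegral_Ioc_sq_mul_exp_pos {δ : ℝ} (hδ : 0 < δ) :
    0 < ∫ u in Ioc 0 δ, u ^ 2 * exp (-2 * u) := by
  rw [← intervalIntegral.integral_of_le hδ.le]
  exact intervalIntegral.intervalIntegral_pos_of_pos_on
    ((by fun_prop : Continuous fun u : ℝ => u ^ 2 * exp (-2 * u)).intervalIntegrable _ _)
    (fun u hu => by have := hu.1; positivity) hδ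

section Laplace

variable {Ω : Type*} [MeasurableSpace Ω] {μ : Measure Ω} {T : Ω → ℝ}

lemma integrable_inv_one_add [IsFiniteMeasure μ] (hT : AEMeasurable T μ) (hT0 : 0 ≤ᵐ[μ] T) :
    Integrable (fun a => (1 + T a)⁻¹) μ := by
  refine (integrable_const 1).mono' (by fun_prop) ?_
  filter_upwards [hT0] with a (ha : 0 ≤ T a)
  rw [norm_of_nonneg (by positivity)]
  exact inv_le_one_of_one_le₀ (by linarith)

lemma integral_sq_sub_one_div_eq [IsProbabilityMeasure μ] (hT : AEMeasurable T μ) (hT0 : 0 ≤ᵐ[μ] T)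
    (hT1 : ∫ a, T a ∂μ = 1) :
    ∫ a, (T a - 1) ^ 2 / (2 + (T a - 1)) ∂μ = 4 * ∫ a, (1 + T a)⁻¹ ∂μ - 2 := by
  have hTi : Integrable T μ := .of_integral_ne_zero (by simp [hT1])
  have hc : Integrable (fun _ : Ω => (3 : ℝ)) μ := integrable_const 3
  have hinv := (integrable_inv_one_add hT hT0).const_mul 4
  calc ∫ a, (T a - 1) ^ 2 / (2 + (T a - 1)) ∂μ
      = ∫ a, (T a - 3 + 4 * (1 + T a)⁻¹) ∂μ := by
        refine integral_congr_ae ?_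
        filter_upwards [hT0] with a (ha : 0 ≤ T a)
        have : 1 + T a ≠ 0 := by linarith
        rw [show 2 + (T a - 1) = 1 + T a by ring]
        field_simp
        ring
    _ = 4 * ∫ a, (1 + T a)⁻¹ ∂μ - 2 := by
        have hsub : Integrable (fun a => T a - 3) μ := hTi.sub hc
        rw [integral_add hsub hinv, integral_sub hTi hc, integral_const_mul, hT1, integral_const,
          probReal_univ, one_smul]
        ring

lemma integrable_exp_neg_one_add_mul_prod [IsFiniteMeasure μ] (hT : Measurable T)
    (hT0 : 0 ≤ᵐ[μ] T) :
    Integrable (fun p : Ω × ℝ => exp (-(1 + T p.1) * p.2))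
      (μ.prod (volume.restrict (Ioi 0))) := by
  rw [integrable_prod_iff (by fun_prop)]
  constructor
  · filter_upwards [hT0] with a (ha : 0 ≤ T a)
    exact exp_neg_integrableOn_Ioi 0 (by linarith)
  · refine (integrable_inv_one_add hT.aemeasurable hT0).congr ?_
    filter_upwards [hT0] with a (ha : 0 ≤ T a)
    simp_rw [norm_of_nonneg (exp_pos _).le]
    rw [integral_exp_neg_mul_Ioi_zero (by linarith)]

lemma integral_exp_neg_one_add_mul_eq (u : ℝ) :
    ∫ a, exp (-(1 + T a) * u) ∂μ = exp (-u) * mgf T μ (-u) := by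
  rw [mgf, ← integral_const_mul]
  congr with a
  rw [← exp_add]
  ring_nf

lemma integral_inv_one_add_eq_integral_mgf [IsFiniteMeasure μ] (hT : Measurable T)
    (hT0 : 0 ≤ᵐ[μ] T) :
    ∫ a, (1 + T a)⁻¹ ∂μ = ∫ u in Ioi 0, exp (-u) * mgf T μ (-u) := by
  have hswap := integral_integral_swap (f := fun a u => exp (-(1 + T a) * u))
    (integrable_exp_neg_one_add_mul_prod hT hT0)
  calc ∫ a, (1 + T a)⁻¹ ∂μ = ∫ a, (∫ u in Ioi 0, exp (-(1 + T a) * u)) ∂μ := by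
        refine integral_congr_ae ?_
        filter_upwards [hT0] with a (ha : 0 ≤ T a)
        rw [integral_exp_neg_mul_Ioi_zero (by linarith)]
    _ = ∫ u in Ioi 0, exp (-u) * mgf T μ (-u) := by
        rw [hswap]
        exact integral_congr_ae (ae_of_all _ integral_exp_neg_one_add_mul_eq)

lemma integrableOn_exp_neg_mul_mgf [IsFiniteMeasure μ] (hT : Measurable T) (hT0 : 0 ≤ᵐ[μ] T) :
    IntegrableOn (fun u => exp (-u) * mgf T μ (-u)) (Ioi 0) :=
  (integrable_exp_neg_one_add_mul_prod hT hT0).integral_prod_right.congr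
    (ae_of_all _ integral_exp_neg_one_add_mul_eq)

lemma half_add_mul_le_integral_inv_one_add [IsFiniteMeasure μ] (hT : Measurable T)
    (hT0 : 0 ≤ᵐ[μ] T) {δ c : ℝ}
    (hexp : ∀ u, 0 < u → exp (-u) ≤ mgf T μ (-u))
    (hexp' : ∀ u ∈ Ioc 0 δ, exp (-u) * (1 + c * u ^ 2) ≤ mgf T μ (-u)) :
    2⁻¹ + c * ∫ u in Ioc 0 δ, u ^ 2 * exp (-2 * u) ≤ ∫ a, (1 + T a)⁻¹ ∂μ := by
  set h : ℝ → ℝ := (Ioc 0 δ).indicator fun u => c * (u ^ 2 * exp (-2 * u))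
  have hi : Integrable h (volume.restrict (Ioi 0)) :=
    ((by fun_prop : Continuous fun u : ℝ => c * (u ^ 2 * exp (-2 * u))).integrableOn_Ioc
      |>.integrable_indicator measurableSet_Ioc).restrict
  have he : IntegrableOn (fun u : ℝ => exp (-2 * u)) (Ioi 0) := exp_neg_integrableOn_Ioi 0 two_pos
  calc 2⁻¹ + c * ∫ u in Ioc 0 δ, u ^ 2 * exp (-2 * u)
      = ∫ u in Ioi 0, (exp (-2 * u) + h u) := by
        rw [integral_add he hi, integral_exp_neg_mul_Ioi_zero two_pos,
          integral_indicator measurableSet_Ioc, Measure.restrict_restrict measurableSet_Ioc,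
          inter_eq_self_of_subset_left Ioc_subset_Ioi_self, integral_const_mul]
    _ ≤ ∫ u in Ioi 0, exp (-u) * mgf T μ (-u) := by
        refine setIntegral_mono_on (he.add hi) (integrableOn_exp_neg_mul_mgf hT hT0)
          measurableSet_Ioi fun u (hu : 0 < u) => ?_
        have hsq : exp (-2 * u) = exp (-u) * exp (-u) := by rw [← exp_add]; ring_nf
        by_cases huδ : u ≤ δ
        · have := mul_le_mul_of_nonneg_left (hexp' u ⟨hu, huδ⟩) (exp_pos (-u)).le
          simp only [h, indicator_of_mem (show u ∈ Ioc 0 δ from ⟨hu, huδ⟩), hsq]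
          linarith
        · simp only [h, indicator_of_notMem (show u ∉ Ioc 0 δ from fun h => huδ h.2), hsq]
          simpa using mul_le_mul_of_nonneg_left (hexp u hu) (exp_pos (-u)).le
    _ = ∫ a, (1 + T a)⁻¹ ∂μ := (integral_inv_one_add_eq_integral_mgf hT hT0).symm

end Laplace

section WeightedSum

variable {Ω : Type*} [MeasurableSpace Ω] {μ : Measure Ω}

lemma ae_summable_norm_of_summable_integral_norm {ι E : Type*} [Countable ι]
    [NormedAddCommGroup E] {F : ι → Ω → E} (hF : ∀ i, Integrable (F i) μ)
    (hs : Summable fun i => ∫ a, ‖F i a‖ ∂μ) : ∀ᵐ a ∂μ, Summable fun i => ‖F i a‖ := by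
  refine summable_norm_of_tsum_eLpNorm_ne_top le_rfl (fun i => (hF i).1) ?_
  simp_rw [eLpNorm_one_eq_lintegral_enorm, ← ofReal_integral_norm_eq_lintegral_enorm (hF _)]
  rw [← ENNReal.ofReal_tsum_of_nonneg (fun i => integral_nonneg fun _ => norm_nonneg _) hs]
  exact ENNReal.ofReal_ne_top

lemma tendsto_mgf_of_ae_tendsto [IsFiniteMeasure μ] {X : ℕ → Ω → ℝ} {Y : Ω → ℝ}
    (hX : ∀ n, AEMeasurable (X n) μ) (hX0 : ∀ n, 0 ≤ᵐ[μ] X n)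
    (hlim : ∀ᵐ a ∂μ, Tendsto (X · a) atTop (𝓝 (Y a))) {t : ℝ} (ht : t ≤ 0) :
    Tendsto (fun n => mgf (X n) μ t) atTop (𝓝 (mgf Y μ t)) := by
  refine tendsto_integral_of_dominated_convergence (fun _ => 1) (fun n => by fun_prop)
    (integrable_const 1) (fun n => ?_) (hlim.mono fun a ha => ?_)
  · filter_upwards [hX0 n] with a (ha : 0 ≤ X n a)
    rw [norm_of_nonneg (exp_pos _).le, exp_le_one_iff]
    exact mul_nonpos_of_nonpos_of_nonneg ht ha
  · exact (continuous_exp.tendsto _).comp (ha.const_mul t)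

variable {ξ : ℕ → Ω → ℝ} {α : ℕ → ℝ}

lemma summable_integral_norm_mul (hξ0 : ∀ i, 0 ≤ᵐ[μ] ξ i) (hξ1 : ∀ i, ∫ a, ξ i a ∂μ = 1)
    (hα0 : ∀ i, 0 ≤ α i) (hα : HasSum α 1) :
    Summable fun i => ∫ a, ‖α i * ξ i a‖ ∂μ := by
  refine hα.summable.congr fun i => ?_
  rw [integral_congr_ae (g := fun a => α i * ξ i a), integral_const_mul, hξ1, mul_one]
  filter_upwards [hξ0 i] with a (ha : 0 ≤ ξ i a)
  exact norm_of_nonneg (mul_nonneg (hα0 i) ha)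

lemma ae_hasSum_mul_tsum (hξ0 : ∀ i, 0 ≤ᵐ[μ] ξ i) (hξ1 : ∀ i, ∫ a, ξ i a ∂μ = 1)
    (hα0 : ∀ i, 0 ≤ α i) (hα : HasSum α 1) :
    ∀ᵐ a ∂μ, HasSum (fun i => α i * ξ i a) (∑' i, α i * ξ i a) :=
  (ae_summable_norm_of_summable_integral_norm
    (fun i => (Integrable.of_integral_ne_zero (by simp [hξ1 i])).const_mul (α i))
    (summable_integral_norm_mul hξ0 hξ1 hα0 hα)).mono fun _ h => h.of_norm.hasSum

lemma integral_tsum_mul_eq_one (hξ0 : ∀ i, 0 ≤ᵐ[μ] ξ i) (hξ1 : ∀ i, ∫ a, ξ i a ∂μ = 1)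
    (hα0 : ∀ i, 0 ≤ α i) (hα : HasSum α 1) :
    ∫ a, ∑' i, α i * ξ i a ∂μ = 1 := by
  refine (hasSum_integral_of_summable_integral_norm
    (fun i => (Integrable.of_integral_ne_zero (by simp [hξ1 i])).const_mul (α i))
    (summable_integral_norm_mul hξ0 hξ1 hα0 hα)).unique ?_
  simpa [integral_const_mul, hξ1] using hα

lemma mgf_sum_mul_eq_prod (hmeas : ∀ i, Measurable (ξ i)) (hindep : iIndepFun ξ μ)
    (hident : ∀ i, IdentDistrib (ξ i) (ξ 0) μ μ) (s : Finset ℕ) (t : ℝ) :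
    mgf (∑ i ∈ s, fun a => α i * ξ i a) μ t = ∏ i ∈ s, mgf (ξ 0) μ (α i * t) := by
  have hindep' : iIndepFun (fun i a => α i * ξ i a) μ :=
    hindep.comp (fun i x => α i * x) fun i => measurable_const_mul _
  rw [hindep'.mgf_sum fun i => (hmeas i).const_mul _]
  refine Finset.prod_congr rfl fun i _ => ?_
  rw [mgf_const_mul, mgf_congr_of_identDistrib _ _ (hident i)]

lemma exp_mul_one_add_le_mgf_tsum [IsProbabilityMeasure μ] (hmeas : ∀ i, Measurable (ξ i))
    (hindep : iIndepFun ξ μ) (hident : ∀ i, IdentDistrib (ξ i) (ξ 0) μ μ)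
    (hξ0 : ∀ i, 0 ≤ᵐ[μ] ξ i) (hξ1 : ∫ a, ξ 0 a ∂μ = 1)
    (hα : ∀ i, α i ∈ Icc (0 : ℝ) 1) (hα1 : HasSum α 1) {c t : ℝ} (hc : 0 ≤ c) (ht : t ≤ 0)
    (hfac : ∀ τ ∈ Icc t 0, exp τ * (1 + c * τ ^ 2) ≤ mgf (ξ 0) μ τ) :
    exp t * (1 + c * (∑' i, α i ^ 2) * t ^ 2) ≤ mgf (fun a => ∑' i, α i * ξ i a) μ t := by
  have hα0 (i : ℕ) : 0 ≤ α i := (hα i).1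
  have hξ1' (i : ℕ) : ∫ a, ξ i a ∂μ = 1 := (hident i).integral_eq.trans hξ1
  have hpartial (N : ℕ) : exp t * (1 + c * (∑ i ∈ Finset.range N, α i ^ 2) * t ^ 2) ≤
      mgf (∑ i ∈ Finset.range N, fun a => α i * ξ i a) μ t := by
    have hsum := sum_le_hasSum (Finset.range N) (fun i _ => hα0 i) hα1
    calc exp t * (1 + c * (∑ i ∈ Finset.range N, α i ^ 2) * t ^ 2)
        = exp t * (1 + ∑ i ∈ Finset.range N, c * (α i * t) ^ 2) := by
          simp only [Finset.mul_sum, Finset.sum_mul, mul_pow, mul_assoc]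
      _ ≤ exp (∑ i ∈ Finset.range N, α i * t) *
            ∏ i ∈ Finset.range N, (1 + c * (α i * t) ^ 2) := by
          refine mul_le_mul (exp_le_exp.2 ?_)
            (Finset.one_add_sum_le_prod_one_add _ fun i _ => by positivity) (by positivity)
            (exp_pos _).le
          rw [← Finset.sum_mul]
          nlinarith
      _ = ∏ i ∈ Finset.range N, exp (α i * t) * (1 + c * (α i * t) ^ 2) := by
          rw [exp_sum, Finset.prod_mul_distrib]
      _ ≤ ∏ i ∈ Finset.range N, mgf (ξ 0) μ (α i * t) := by
          refine Finset.prod_le_prod (fun i _ => by positivity) fun i _ =>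
            hfac _ ⟨by nlinarith [mul_nonpos_of_nonneg_of_nonpos (sub_nonneg.2 (hα i).2) ht],
              mul_nonpos_of_nonneg_of_nonpos (hα0 i) ht⟩
      _ = mgf (∑ i ∈ Finset.range N, fun a => α i * ξ i a) μ t :=
          (mgf_sum_mul_eq_prod hmeas hindep hident _ t).symm
  have hsq : Summable fun i => α i ^ 2 :=
    hα1.summable.of_nonneg_of_le (fun i => sq_nonneg _) fun i =>
      pow_le_of_le_one (hα0 i) (hα i).2 two_ne_zero
  refine le_of_tendsto_of_tendsto' ?_ (tendsto_mgf_of_ae_tendsto (fun N => ?_) (fun N => ?_) ?_ ht)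
    hpartial
  · exact (((hsq.hasSum.tendsto_sum_nat.const_mul c).mul_const _).const_add 1).const_mul _
  · exact Finset.aemeasurable_sum _ fun i _ => ((hmeas i).const_mul _).aemeasurable
  · filter_upwards [ae_all_iff.2 hξ0] with a ha
    simp only [Finset.sum_apply, Pi.zero_apply]
    exact Finset.sum_nonneg fun i _ => mul_nonneg (hα0 i) (ha i)
  · filter_upwards [ae_hasSum_mul_tsum hξ0 hξ1' hα0 hα1] with a ha
    simpa only [Finset.sum_apply] using ha.tendsto_sum_nat

end WeightedSum

theorem fractional_moment_lower_bound_general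
    {Ω : Type} [MeasurableSpace Ω] (μ : Measure Ω) [IsProbabilityMeasure μ]
    (ξ : ℕ → Ω → ℝ)
    (hmeas : ∀ i, Measurable (ξ i))
    (hindep : iIndepFun ξ μ)
    (hident : ∀ i, IdentDistrib (ξ i) (ξ 0) μ μ)
    (hpos : ∀ i, ∀ᵐ a ∂μ, 0 < ξ i a)
    (hnonconst : ¬ ∃ r : ℝ, ∀ᵐ a ∂μ, ξ 0 a = r)
    (hmean : ∫ a, ξ 0 a ∂μ = 1) :
    ∃ c : ℝ, 0 < c ∧ ∀ α : ℕ → ℝ, (∀ i, α i ∈ Set.Icc (0:ℝ) 1) → HasSum α 1 →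
      (1 / c) * ∑' i : ℕ, (α i) ^ 2 ≤
        ∫ a, ((∑' i : ℕ, α i * ξ i a) - 1) ^ 2 / (2 + ((∑' i : ℕ, α i * ξ i a) - 1)) ∂μ := by
  have hξ0 (i : ℕ) : 0 ≤ᵐ[μ] ξ i := (hpos i).mono fun _ h => h.le
  obtain ⟨K, hK, hm⟩ := exists_pos_setIntegral_sq_sub_one_pos (hmeas 0) (hξ0 0)
    fun h => hnonconst ⟨1, h⟩
  set m := ∫ a in {a | ξ 0 a ≤ K}, (ξ 0 a - 1) ^ 2 ∂μ
  set J := ∫ u in Ioc 0 K⁻¹, u ^ 2 * exp (-2 * u)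
  have hJ : 0 < J := setIntegral_Ioc_sq_mul_exp_pos (inv_pos.2 hK)
  refine ⟨(m * J)⁻¹, inv_pos.2 (mul_pos hm hJ), fun α hα hα1 => ?_⟩
  set T : Ω → ℝ := fun a => ∑' i, α i * ξ i a
  have hT : Measurable T := Measurable.tsum fun i => (hmeas i).const_mul _
  have hT0 : 0 ≤ᵐ[μ] T := by
    filter_upwards [ae_all_iff.2 hξ0] with a ha
    exact tsum_nonneg fun i => mul_nonneg (hα i).1 (ha i)
  have hT1 : ∫ a, T a ∂μ = 1 := integral_tsum_mul_eq_one hξ0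
    (fun i => (hident i).integral_eq.trans hmean) (fun i => (hα i).1) hα1
  have hexp (u : ℝ) (hu : 0 < u) : exp (-u) ≤ mgf T μ (-u) := by
    simpa using exp_mul_one_add_le_mgf_tsum hmeas hindep hident hξ0 hmean hα hα1 le_rfl
      (neg_nonpos.2 hu.le) fun τ hτ => by
        simpa using exp_le_mgf_of_integral_eq_one (hmeas 0).aemeasurable (hξ0 0) hmean hτ.2
  have hexp' (u : ℝ) (hu : u ∈ Ioc 0 K⁻¹) :
      exp (-u) * (1 + m / 4 * (∑' i, α i ^ 2) * u ^ 2) ≤ mgf T μ (-u) := by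
    simpa only [neg_sq] using exp_mul_one_add_le_mgf_tsum hmeas hindep hident hξ0 hmean hα hα1
      (by positivity) (neg_nonpos.2 hu.1.le) fun τ hτ =>
        exp_mul_one_add_le_mgf (hmeas 0) (hξ0 0) hmean hK (by linarith [hτ.1, hu.2]) hτ.2
  have hlow := half_add_mul_le_integral_inv_one_add hT hT0 hexp hexp'
  rw [one_div, inv_inv, integral_sq_sub_one_div_eq hT.aemeasurable hT0 hT1]
  linarith

/-- Let `(ξ_i)` be positive, non-constant i.i.d. random variables with
`𝔼[ξ₁] = 1` and `𝔼[ξ₁³ + (log ξ₁)²] < ∞`. Then there is a constant `c ∈ (0,∞)`, depending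
only on the law of `ξ₁`, such that for every `(α_i) ∈ [0,1]^ℕ` with `Σ α_i = 1`, setting
`U = Σ α_i ξ_i − 1`, one has `(1/c) Σ α_i² ≤ 𝔼[U²/(2+U)]`. -/
theorem fractional_moment_lower_bound
    {Ω : Type} [MeasurableSpace Ω] (μ : Measure Ω) [IsProbabilityMeasure μ]
    (ξ : ℕ → Ω → ℝ)
    (hmeas : ∀ i, Measurable (ξ i))
    (hindep : iIndepFun ξ μ)
    (hident : ∀ i, IdentDistrib (ξ i) (ξ 0) μ μ)
    (hpos : ∀ i, ∀ᵐ a ∂μ, 0 < ξ i a)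
    (hnonconst : ¬ ∃ r : ℝ, ∀ᵐ a ∂μ, ξ 0 a = r)
    (hmean : ∫ a, ξ 0 a ∂μ = 1)
    (hcube : Integrable (fun a => (ξ 0 a) ^ 3) μ)
    (hlogsq : Integrable (fun a => (Real.log (ξ 0 a)) ^ 2) μ) :
    ∃ c : ℝ, 0 < c ∧ ∀ α : ℕ → ℝ, (∀ i, α i ∈ Set.Icc (0:ℝ) 1) → HasSum α 1 →
      (1 / c) * ∑' i : ℕ, (α i) ^ 2 ≤
        ∫ a, ((∑' i : ℕ, α i * ξ i a) - 1) ^ 2 / (2 + ((∑' i : ℕ, α i * ξ i a) - 1)) ∂μ :=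
  fractional_moment_lower_bound_general μ ξ hmeas hindep hident hpos hnonconst hmean
end

section
/- For every θ ∈ (0,1) there exist constants c₁, c₂ ∈ (0,∞) such that for all u ∈ (−1,∞): c₁ u²/(2+u) ≤ 1 + θu − (1+u)^θ ≤ c₂ u². -/
/-! The upper bound is Bernoulli's inequality `(1 + u) ^ (1 - θ) ≤ 1 + (1 - θ) u` combined with
`(1 + u) ^ θ (1 + u) ^ (1 - θ) = 1 + u`. For the lower bound, apply the tangent-line inequality of
the concave map `x ↦ x ^ θ` at `1` and at the midpoint `y = 1 + u / 2`: the gap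
`1 + θ u - (1 + u) ^ θ` is at least `θ (y - 1) (1 - y ^ (θ - 1))`, and Bernoulli's inequality bounds
`1 - y ^ (θ - 1)` below by `(1 - θ) (1 - 1 / y)` when `y ≥ 1` and above by `(1 - θ) (y - 1)`
when `y ≤ 1`. -/

namespace Real

variable {p x y : ℝ}

theorem rpow_le_one_add_mul_sub_one (hx : 0 ≤ x) (hp₀ : 0 ≤ p) (hp₁ : p ≤ 1) :
    x ^ p ≤ 1 + p * (x - 1) := by
  simpa using rpow_one_add_le_one_add_mul_self (s := x - 1) (by linarith) hp₀ hp₁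

theorem one_add_mul_one_sub_le_rpow_neg (hy : 0 < y) (hp₀ : 0 ≤ p) (hp₁ : p ≤ 1) :
    1 + p * (1 - y) ≤ y ^ (-p) := by
  have hle := rpow_le_one_add_mul_sub_one hy.le hp₀ hp₁
  have hpos : 0 < y ^ p := rpow_pos_of_pos hy p
  rw [rpow_neg hy.le]
  calc 1 + p * (1 - y) ≤ (1 + p * (y - 1))⁻¹ := by
        rw [← one_div, le_div_iff₀ (hpos.trans_le hle)]
        nlinarith [sq_nonneg (p * (y - 1))]
    _ ≤ (y ^ p)⁻¹ := inv_anti₀ hpos hle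

theorem rpow_neg_le_one_add_mul_inv_sub_one (hy : 0 < y) (hp₀ : 0 ≤ p) (hp₁ : p ≤ 1) :
    y ^ (-p) ≤ 1 + p * (y⁻¹ - 1) := by
  simpa [inv_rpow hy.le, rpow_neg hy.le] using
    rpow_le_one_add_mul_sub_one (inv_nonneg.2 hy.le) hp₀ hp₁

theorem rpow_le_rpow_add_mul_sub (hx : 0 ≤ x) (hy : 0 < y) (hp₀ : 0 ≤ p) (hp₁ : p ≤ 1) :
    x ^ p ≤ y ^ p + p * y ^ (p - 1) * (x - y) := by
  have hxy := rpow_le_one_add_mul_sub_one (div_nonneg hx hy.le) hp₀ hp₁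
  rw [div_rpow hx hy.le, div_le_iff₀ (rpow_pos_of_pos hy p)] at hxy
  rw [rpow_sub_one hy.ne']
  calc x ^ p ≤ (1 + p * (x / y - 1)) * y ^ p := hxy
    _ = y ^ p + p * (y ^ p / y) * (x - y) := by field_simp

theorem mul_sq_div_le_mul_one_sub_rpow_neg (hy : 1 / 2 ≤ y) (hp₀ : 0 ≤ p) (hp₁ : p ≤ 1) :
    p * ((y - 1) ^ 2 / (2 * y)) ≤ (y - 1) * (1 - y ^ (-p)) := by
  have hy₀ : 0 < y := by linarith
  rcases le_total 1 y with h1y | hy1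
  · have hinv := rpow_neg_le_one_add_mul_inv_sub_one hy₀ hp₀ hp₁
    calc p * ((y - 1) ^ 2 / (2 * y)) ≤ p * ((y - 1) ^ 2 / y) := by
          gcongr; linarith
      _ = (y - 1) * (p * (1 - y⁻¹)) := by field_simp
      _ ≤ (y - 1) * (1 - y ^ (-p)) := by gcongr; linarith
  · have hneg := one_add_mul_one_sub_le_rpow_neg hy₀ hp₀ hp₁
    calc p * ((y - 1) ^ 2 / (2 * y)) ≤ p * (y - 1) ^ 2 := by
          gcongr; exact div_le_self (sq_nonneg _) (by linarith)
      _ = (y - 1) * (p * (y - 1)) := by ring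
      _ ≤ (y - 1) * (1 - y ^ (-p)) := by
          apply mul_le_mul_of_nonpos_left _ (by linarith); linarith

end Real

open Real

theorem mul_sq_div_le_one_add_mul_sub_rpow {θ u : ℝ} (hθ₀ : 0 ≤ θ) (hθ₁ : θ ≤ 1) (hu : -1 < u) :
    θ * (1 - θ) / 4 * (u ^ 2 / (2 + u)) ≤ 1 + θ * u - (1 + u) ^ θ := by
  have htangent := rpow_le_rpow_add_mul_sub (x := 1 + u) (y := 1 + u / 2)
    (by linarith) (by linarith) hθ₀ hθ₁
  have hmid := rpow_le_one_add_mul_sub_one (x := 1 + u / 2) (by linarith) hθ₀ hθ₁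
  have hquad := mul_sq_div_le_mul_one_sub_rpow_neg (y := 1 + u / 2) (by linarith)
    (sub_nonneg.2 hθ₁) (by linarith : 1 - θ ≤ 1)
  rw [neg_sub] at hquad
  calc θ * (1 - θ) / 4 * (u ^ 2 / (2 + u))
        = θ * ((1 - θ) * ((1 + u / 2 - 1) ^ 2 / (2 * (1 + u / 2)))) := by
        field_simp; ring
    _ ≤ θ * ((1 + u / 2 - 1) * (1 - (1 + u / 2) ^ (θ - 1))) := by gcongr
    _ ≤ 1 + θ * u - (1 + u) ^ θ := by linarith

theorem one_add_mul_sub_rpow_le_mul_sq {θ u : ℝ} (hθ₀ : 0 ≤ θ) (hθ₁ : θ ≤ 1) (hu : -1 < u) :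
    1 + θ * u - (1 + u) ^ θ ≤ (1 - θ) * u ^ 2 := by
  have hx : 0 < 1 + u := by linarith
  have hb := rpow_le_one_add_mul_sub_one hx.le (sub_nonneg.2 hθ₁) (by linarith : 1 - θ ≤ 1)
  rw [add_sub_cancel_left] at hb
  have hb₀ : 0 < 1 + (1 - θ) * u := (rpow_pos_of_pos hx (1 - θ)).trans_le hb
  have hprod : (1 + u) ^ θ * (1 + u) ^ (1 - θ) = 1 + u := by
    rw [← rpow_add hx, add_sub_cancel, rpow_one]
  have hab : 1 + u ≤ (1 + u) ^ θ * (1 + (1 - θ) * u) :=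
    hprod.symm.trans_le (mul_le_mul_of_nonneg_left hb (rpow_nonneg hx.le θ))
  refine le_of_mul_le_mul_left ?_ hb₀
  -- `(1 + θ u) (1 + (1 - θ) u) = 1 + u + θ (1 - θ) u²`
  nlinarith [mul_nonneg (mul_nonneg (sq_nonneg (1 - θ)) hx.le) (sq_nonneg u)]

/-- For every `θ ∈ (0,1)` there exist constants `c₁, c₂ ∈ (0,∞)` such that
for all `u ∈ (−1,∞)`: `c₁ u²/(2+u) ≤ 1 + θu − (1+u)^θ ≤ c₂ u²`. -/
theorem fractional_moment_auxiliary_bounds (θ : ℝ) (hθ : θ ∈ Set.Ioo (0:ℝ) 1) :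
    ∃ c₁ : ℝ, 0 < c₁ ∧ ∃ c₂ : ℝ, 0 < c₂ ∧ ∀ u : ℝ, -1 < u →
      c₁ * (u ^ 2 / (2 + u)) ≤ 1 + θ * u - (1 + u) ^ θ ∧
      1 + θ * u - (1 + u) ^ θ ≤ c₂ * u ^ 2 := by
  obtain ⟨hθ₀, hθ₁⟩ := hθ
  have h1θ : 0 < 1 - θ := sub_pos.2 hθ₁
  refine ⟨θ * (1 - θ) / 4, by positivity, 1 - θ, h1θ, fun u hu => ⟨?_, ?_⟩⟩
  · exact mul_sq_div_le_one_add_mul_sub_rpow hθ₀.le hθ₁.le hu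
  · exact one_add_mul_sub_rpow_le_mul_sq hθ₀.le hθ₁.le hu
end
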